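/- arXiv:2402.11280 — 4 statements merged into one kernel-verified Lean document; each statement's English description precedes it below -/
import Mathlib

section
/- Under Assumption A, there exist τ₀ > 0 and Q > 0, depending only on d, k, L, β, γ, ‖x₀‖ and T (in particular independent of i, τ, n and N), such that for every N ∈ ℕ with τ = T/N ≤ τ₀, the iterates of the discrete HiSD scheme satisfy ‖v_{i,n} − v_{i,n−1}‖ ≤ Q τ for all 1 ≤ i ≤ k and 1 ≤ n ≤ N. -/
/-!
The reflection `f ↦ f - 2 ∑ⱼ ⟪vⱼ, f⟫ vⱼ` is an isometry, so the linear growth of `F` and a discrete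
Grönwall estimate give `1 + ‖xₙ‖ ≤ exp (βLT) (1 + ‖x₀‖)`; hence `‖J xₙ‖ ≤ C_J` along the whole
trajectory. A step therefore perturbs each `v_{i,n}` by `τγ J(xₙ) v_{i,n}`, of norm at most
`ε = τγ C_J`, and Gram–Schmidt amplifies such perturbations only by a constant: by orthogonality of
the old frame, the coefficient of `ṽ_{i,n+1}` on `v_{j,n+1}` (`j < i`) is at most
`ε + 2 ‖v_{j,n+1} - v_{j,n}‖`, and normalising at most doubles the distance to the unit vector
`v_{i,n}`. This gives `ηᵢ ≤ 2 (i + 1) ε + 4 ∑_{j<i} ηⱼ` for `ηᵢ = ‖v_{i,n+1} - v_{i,n}‖`, whence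
`ηᵢ ≤ 2 (k + 1) 5ᵏ ε`.
-/

open scoped RealInnerProductSpace BigOperators

noncomputable section

open Finset

variable {E : Type*} [NormedAddCommGroup E] [InnerProductSpace ℝ E]

theorem Orthonormal.norm_sub_two_smul_sum_inner_smul {ι : Type*} [Fintype ι] {v : ι → E}
    (hv : Orthonormal ℝ v) (f : E) : ‖f - (2 : ℝ) • ∑ j, ⟪v j, f⟫ • v j‖ = ‖f‖ := by
  set p := ∑ j, ⟪v j, f⟫ • v j
  have hpp : ⟪p, p⟫ = ⟪f, p⟫ := by
    conv_lhs => rw [sum_inner]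
    rw [inner_sum]
    refine sum_congr rfl fun j _ => ?_
    rw [real_inner_smul_left, real_inner_smul_right, hv.inner_right_fintype, real_inner_comm]
  rw [← sq_eq_sq₀ (norm_nonneg _) (norm_nonneg _), ← real_inner_self_eq_norm_sq,
    ← real_inner_self_eq_norm_sq]
  simp only [inner_sub_left, inner_sub_right, real_inner_smul_left, real_inner_smul_right,
    real_inner_comm f p, hpp]
  ring

theorem norm_inv_norm_smul_sub_le {v : E} (hv : ‖v‖ = 1) (w : E) :
    ‖‖w‖⁻¹ • w - v‖ ≤ 2 * ‖w - v‖ := by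
  rcases eq_or_ne w 0 with rfl | hw
  · simp [hv]
  have hscale : ‖‖w‖⁻¹ • w - w‖ = |‖v‖ - ‖w‖| := by
    have hw' : 0 < ‖w‖ := norm_pos_iff.mpr hw
    have hcoef : (‖w‖⁻¹ - 1) * ‖w‖ = ‖v‖ - ‖w‖ := by rw [hv]; field_simp
    rw [show ‖w‖⁻¹ • w - w = (‖w‖⁻¹ - 1) • w by rw [sub_smul, one_smul], norm_smul,
      Real.norm_eq_abs, ← hcoef, abs_mul, abs_of_pos hw']
  calc ‖‖w‖⁻¹ • w - v‖ ≤ ‖‖w‖⁻¹ • w - w‖ + ‖w - v‖ := norm_sub_le_norm_sub_add_norm_sub _ _ _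
    _ ≤ ‖w - v‖ + ‖w - v‖ := by
        rw [hscale, norm_sub_rev w v]; gcongr; exact abs_norm_sub_norm_le v w
    _ = 2 * ‖w - v‖ := by ring

variable {k : ℕ}

theorem le_mul_five_pow_of_le_add_four_mul_sum {η : Fin k → ℝ} {a : ℝ}
    (h : ∀ i, η i ≤ a + 4 * ∑ j ∈ Iio i, η j) (i : Fin k) : η i ≤ a * 5 ^ (i : ℕ) := by
  induction i using WellFoundedLT.induction with
  | ind i ih =>
  have hsum : ∑ j ∈ Iio i, η j ≤ a * ∑ m ∈ range i, (5 : ℝ) ^ m := by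
    calc ∑ j ∈ Iio i, η j ≤ ∑ j ∈ Iio i, a * 5 ^ (j : ℕ) :=
          sum_le_sum fun j hj => ih j (mem_Iio.mp hj)
      _ = a * ∑ m ∈ range i, (5 : ℝ) ^ m := by
          rw [← mul_sum, ← Nat.Iio_eq_range, ← Fin.map_valEmbedding_Iio, sum_map]
          rfl
  linear_combination h i + 4 * hsum + a * geom_sum_mul (5 : ℝ) i

def gramSchmidtResidual (a u : Fin k → E) (i : Fin k) : E :=
  a i - ∑ j ∈ Iio i, ⟪a i, u j⟫ • u j

def IsGramSchmidt (a u : Fin k → E) : Prop :=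
  ∀ i, gramSchmidtResidual a u i ≠ 0 ∧
    u i = ‖gramSchmidtResidual a u i‖⁻¹ • gramSchmidtResidual a u i

namespace IsGramSchmidt

variable {a u v δ : Fin k → E} {ε : ℝ}

theorem norm_eq_one (h : IsGramSchmidt a u) (i : Fin k) : ‖u i‖ = 1 := by
  rw [(h i).2, norm_smul, norm_inv, norm_norm, inv_mul_cancel₀ (norm_ne_zero_iff.mpr (h i).1)]

theorem inner_eq_zero_of_lt (h : IsGramSchmidt a u) (i : Fin k) :
    ∀ j < i, ⟪u i, u j⟫ = 0 := by
  induction i using WellFoundedLT.induction with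
  | ind i ih =>
  intro j hji
  have hresidual : ⟪gramSchmidtResidual a u i, u j⟫ = 0 := by
    rw [gramSchmidtResidual, inner_sub_left, sum_inner, sum_eq_single_of_mem j (mem_Iio.mpr hji)]
    · rw [real_inner_smul_left, real_inner_self_eq_norm_sq, h.norm_eq_one, one_pow, mul_one,
        sub_self]
    · intro l hl hlj
      rw [real_inner_smul_left, mul_eq_zero]
      right
      rcases lt_or_gt_of_ne hlj with hlj | hjl
      · rw [real_inner_comm]; exact ih j hji l hlj
      · exact ih l (mem_Iio.mp hl) j hjl
  rw [(h i).2, real_inner_smul_left, hresidual, mul_zero]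

theorem orthonormal (h : IsGramSchmidt a u) : Orthonormal ℝ u := by
  classical
  rw [orthonormal_iff_ite]
  intro i j
  rcases lt_trichotomy i j with hij | rfl | hji
  · rw [real_inner_comm, h.inner_eq_zero_of_lt j i hij, if_neg hij.ne]
  · rw [real_inner_self_eq_norm_sq, h.norm_eq_one, if_pos rfl]; norm_num
  · rw [h.inner_eq_zero_of_lt i j hji, if_neg hji.ne']

theorem norm_sub_le_add_sum (hv : Orthonormal ℝ v) (h : IsGramSchmidt (fun i => v i + δ i) u)
    (hδ : ∀ i, ‖δ i‖ ≤ ε) (hε : ε ≤ 1) (i : Fin k) :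
    ‖u i - v i‖ ≤ 2 * (i + 1) * ε + 4 * ∑ j ∈ Iio i, ‖u j - v j‖ := by
  set a := v i + δ i
  have hcoef : ∀ j < i, |⟪a, u j⟫| ≤ ε + 2 * ‖u j - v j‖ := by
    intro j hji
    have ha : ‖a‖ ≤ 2 := by
      calc ‖a‖ ≤ ‖v i‖ + ‖δ i‖ := norm_add_le _ _
        _ ≤ 2 := by rw [hv.norm_eq_one]; linarith [hδ i]
    have hsplit : ⟪a, u j⟫ = ⟪δ i, v j⟫ + ⟪a, u j - v j⟫ := by
      rw [inner_sub_right, inner_add_left (v i) (δ i) (v j), hv.inner_eq_zero hji.ne']; ring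
    calc |⟪a, u j⟫| ≤ |⟪δ i, v j⟫| + |⟪a, u j - v j⟫| := hsplit ▸ abs_add_le _ _
      _ ≤ ‖δ i‖ * ‖v j‖ + ‖a‖ * ‖u j - v j‖ :=
          add_le_add (abs_real_inner_le_norm _ _) (abs_real_inner_le_norm _ _)
      _ ≤ ε + 2 * ‖u j - v j‖ := by rw [hv.norm_eq_one, mul_one]; gcongr; exact hδ i
  have hresidual : ‖gramSchmidtResidual (fun i => v i + δ i) u i - v i‖ ≤
      (i + 1) * ε + 2 * ∑ j ∈ Iio i, ‖u j - v j‖ := by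
    calc ‖gramSchmidtResidual (fun i => v i + δ i) u i - v i‖
          = ‖δ i - ∑ j ∈ Iio i, ⟪a, u j⟫ • u j‖ := by rw [gramSchmidtResidual]; congr 1; abel
      _ ≤ ‖δ i‖ + ∑ j ∈ Iio i, |⟪a, u j⟫| := by
          refine (norm_sub_le _ _).trans ?_
          gcongr
          refine (norm_sum_le _ _).trans_eq (sum_congr rfl fun j _ => ?_)
          rw [norm_smul, h.norm_eq_one, mul_one, Real.norm_eq_abs]
      _ ≤ ε + ∑ j ∈ Iio i, (ε + 2 * ‖u j - v j‖) :=
          add_le_add (hδ i) (sum_le_sum fun j hj => hcoef j (mem_Iio.mp hj))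
      _ = (i + 1) * ε + 2 * ∑ j ∈ Iio i, ‖u j - v j‖ := by
          rw [sum_add_distrib, sum_const, Fin.card_Iio, ← mul_sum, nsmul_eq_mul]; ring
  calc ‖u i - v i‖ ≤ 2 * ‖gramSchmidtResidual (fun i => v i + δ i) u i - v i‖ :=
        (h i).2 ▸ norm_inv_norm_smul_sub_le (hv.norm_eq_one i) _
    _ ≤ _ := by linarith [hresidual]

theorem norm_sub_le_of_norm_le (hv : Orthonormal ℝ v) (h : IsGramSchmidt (fun i => v i + δ i) u)
    (hδ : ∀ i, ‖δ i‖ ≤ ε) (hε : ε ≤ 1) (i : Fin k) :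
    ‖u i - v i‖ ≤ 2 * (k + 1) * 5 ^ k * ε := by
  have hε₀ : 0 ≤ ε := (norm_nonneg _).trans (hδ i)
  have hrec (j : Fin k) : ‖u j - v j‖ ≤ 2 * (k + 1) * ε + 4 * ∑ l ∈ Iio j, ‖u l - v l‖ := by
    refine (h.norm_sub_le_add_sum hv hδ hε j).trans ?_
    gcongr
    exact_mod_cast j.isLt.le
  calc ‖u i - v i‖ ≤ 2 * (k + 1) * ε * 5 ^ (i : ℕ) := le_mul_five_pow_of_le_add_four_mul_sum hrec i
    _ ≤ 2 * (k + 1) * 5 ^ k * ε := by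
        rw [mul_right_comm]; gcongr
        · norm_num
        · exact i.isLt.le

theorem norm_sub_le_of_opNorm_le {A : E →L[ℝ] E} {s C : ℝ} (hv : Orthonormal ℝ v)
    (h : IsGramSchmidt (fun i => v i + s • A (v i)) u) (hs : 0 ≤ s) (hA : ‖A‖ ≤ C)
    (hsC : s * C ≤ 1) (i : Fin k) : ‖u i - v i‖ ≤ 2 * (k + 1) * 5 ^ k * (s * C) := by
  refine h.norm_sub_le_of_norm_le hv (fun j => ?_) hsC i
  calc ‖s • A (v j)‖ = s * ‖A (v j)‖ := by rw [norm_smul, Real.norm_of_nonneg hs]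
    _ ≤ s * (C * ‖v j‖) := by gcongr; exact A.le_of_opNorm_le hA _
    _ = s * C := by rw [hv.norm_eq_one, mul_one]

end IsGramSchmidt

theorem Orthonormal.one_add_norm_add_smul_reflection_le {ι : Type*} [Fintype ι] {v : ι → E}
    (hv : Orthonormal ℝ v) {x f : E} {τ β L : ℝ} (hτ : 0 ≤ τ) (hβ : 0 ≤ β)
    (hf : ‖f‖ ≤ L * (1 + ‖x‖)) :
    1 + ‖x + τ • (β • (f - (2 : ℝ) • ∑ j, ⟪v j, f⟫ • v j))‖ ≤
      Real.exp (τ * (β * L)) * (1 + ‖x‖) := by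
  calc 1 + ‖x + τ • (β • (f - (2 : ℝ) • ∑ j, ⟪v j, f⟫ • v j))‖ ≤ 1 + ‖x‖ + τ * (β * ‖f‖) := by
        grw [norm_add_le, norm_smul, norm_smul, hv.norm_sub_two_smul_sum_inner_smul,
          Real.norm_of_nonneg hτ, Real.norm_of_nonneg hβ, add_assoc]
    _ ≤ (τ * (β * L) + 1) * (1 + ‖x‖) := by
        grw [hf]; linarith
    _ ≤ Real.exp (τ * (β * L)) * (1 + ‖x‖) := by gcongr; exact Real.add_one_le_exp _

theorem le_exp_mul_of_le_exp_mul_succ {y : ℕ → ℝ} {τ c T : ℝ} {m : ℕ} (hc : 0 ≤ c)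
    (hy₀ : 0 ≤ y 0) (hy : ∀ l < m, y (l + 1) ≤ Real.exp (τ * c) * y l) (hm : m * τ ≤ T) :
    y m ≤ Real.exp (T * c) * y 0 :=
  calc y m ≤ Real.exp (τ * c) ^ m * y 0 := le_geom (Real.exp_nonneg _) m hy
    _ = Real.exp (m * τ * c) * y 0 := by rw [← Real.exp_nat_mul, mul_assoc]
    _ ≤ Real.exp (T * c) * y 0 := by gcongr

theorem hisd_stmt0_general
    (d k : ℕ)
    (F : EuclideanSpace ℝ (Fin d) → EuclideanSpace ℝ (Fin d))
    (J : EuclideanSpace ℝ (Fin d) → (EuclideanSpace ℝ (Fin d) →L[ℝ] EuclideanSpace ℝ (Fin d)))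
    (L : ℝ) (hL : 0 < L)
    (hLip : ∀ x₁ x₂ : EuclideanSpace ℝ (Fin d), ‖J x₂ - J x₁‖ + ‖F x₂ - F x₁‖ ≤ L * ‖x₂ - x₁‖)
    (hgrow : ∀ x : EuclideanSpace ℝ (Fin d), ‖F x‖ ≤ L * (1 + ‖x‖))
    (β γ : ℝ) (hβ : 0 < β) (hγ : 0 < γ)
    (T : ℝ) (hT : 0 < T)
    (x₀ : EuclideanSpace ℝ (Fin d))
    (v₀ : Fin k → EuclideanSpace ℝ (Fin d))
    (hv₀ : ∀ i j : Fin k, ⟪v₀ i, v₀ j⟫ = if i = j then (1:ℝ) else 0) :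
    ∃ τ₀ > (0:ℝ), ∃ Q > (0:ℝ), ∀ (N : ℕ) (τ : ℝ), 0 < N → τ = T / N → τ ≤ τ₀ →
      ∀ (x : ℕ → EuclideanSpace ℝ (Fin d)) (v : ℕ → Fin k → EuclideanSpace ℝ (Fin d)),
        x 0 = x₀ → v 0 = v₀ →
        (∀ n < N, x (n+1) = x n + τ •
            (β • (F (x n) - (2:ℝ) • ∑ j, ⟪v n j, F (x n)⟫ • v n j))) →
        (∀ n < N, ∀ i : Fin k,
          let vt := v n i + (τ * γ) • J (x n) (v n i)
          let w := vt - ∑ j ∈ Finset.Iio i, ⟪vt, v (n+1) j⟫ • v (n+1) j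
          w ≠ 0 ∧ v (n+1) i = ‖w‖⁻¹ • w) →
        ∀ n < N, ∀ i : Fin k, ‖v (n+1) i - v n i‖ ≤ Q * τ := by
  set M := Real.exp (T * (β * L)) * (1 + ‖x₀‖)
  set CJ := ‖J 0‖ + L * M
  refine ⟨1 / (γ * CJ), by positivity, 2 * (k + 1) * 5 ^ k * γ * CJ, by positivity, ?_⟩
  intro N τ hN hτN hτ₀ x v hx0 hv0 hx hv n hn i
  subst hx0 hv0
  have hτ : 0 ≤ τ := hτN ▸ by positivity
  have hGS : ∀ m < N, IsGramSchmidt (fun i => v m i + (τ * γ) • J (x m) (v m i)) (v (m + 1)) :=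
    hv
  have hONB : ∀ m ≤ N, Orthonormal ℝ (v m) := by
    rintro (_ | m) hm
    · classical exact orthonormal_iff_ite.mpr hv₀
    · exact (hGS m hm).orthonormal
  have hxM : ∀ m ≤ N, 1 + ‖x m‖ ≤ M := by
    intro m hm
    refine le_exp_mul_of_le_exp_mul_succ (y := fun m => 1 + ‖x m‖) (τ := τ) (by positivity)
      (by positivity) (fun l hl => ?_) ?_
    · rw [hx l (by omega)]
      exact (hONB l (by omega)).one_add_norm_add_smul_reflection_le hτ hβ.le (hgrow _)
    · calc m * τ ≤ N * τ := by gcongr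
        _ = T := by rw [hτN]; field_simp
  have hJ : ∀ m ≤ N, ‖J (x m)‖ ≤ CJ := by
    intro m hm
    have hLipJ := hLip 0 (x m)
    rw [sub_zero] at hLipJ
    calc ‖J (x m)‖ ≤ ‖J 0‖ + ‖J (x m) - J 0‖ := norm_le_norm_add_norm_sub' _ _
      _ ≤ ‖J 0‖ + L * ‖x m‖ := by linarith [norm_nonneg (F (x m) - F 0)]
      _ ≤ ‖J 0‖ + L * M := by gcongr; linarith [hxM m hm]
  have hε : τ * γ * CJ ≤ 1 := by
    rw [mul_assoc]; exact (le_div_iff₀ (by positivity)).mp hτ₀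
  exact ((hGS n hn).norm_sub_le_of_opNorm_le (hONB n hn.le) (by positivity) (hJ n hn.le) hε
    i).trans_eq (by ring)

theorem hisd_stmt0
    (d k : ℕ) (hd : 1 ≤ d) (hk : 1 ≤ k) (hkd : k ≤ d)
    (F : EuclideanSpace ℝ (Fin d) → EuclideanSpace ℝ (Fin d))
    (J : EuclideanSpace ℝ (Fin d) → (EuclideanSpace ℝ (Fin d) →L[ℝ] EuclideanSpace ℝ (Fin d)))
    (hJsymm : ∀ x u w, ⟪J x u, w⟫ = ⟪u, J x w⟫)
    (L : ℝ) (hL : 0 < L)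
    (hLip : ∀ x₁ x₂ : EuclideanSpace ℝ (Fin d), ‖J x₂ - J x₁‖ + ‖F x₂ - F x₁‖ ≤ L * ‖x₂ - x₁‖)
    (hgrow : ∀ x : EuclideanSpace ℝ (Fin d), ‖F x‖ ≤ L * (1 + ‖x‖))
    (β γ : ℝ) (hβ : 0 < β) (hγ : 0 < γ)
    (T : ℝ) (hT : 0 < T)
    (x₀ : EuclideanSpace ℝ (Fin d))
    (v₀ : Fin k → EuclideanSpace ℝ (Fin d))
    (hv₀ : ∀ i j : Fin k, ⟪v₀ i, v₀ j⟫ = if i = j then (1:ℝ) else 0) :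
    ∃ τ₀ > (0:ℝ), ∃ Q > (0:ℝ), ∀ (N : ℕ) (τ : ℝ), 0 < N → τ = T / N → τ ≤ τ₀ →
      ∀ (x : ℕ → EuclideanSpace ℝ (Fin d)) (v : ℕ → Fin k → EuclideanSpace ℝ (Fin d)),
        x 0 = x₀ → v 0 = v₀ →
        (∀ n < N, x (n+1) = x n + τ •
            (β • (F (x n) - (2:ℝ) • ∑ j, ⟪v n j, F (x n)⟫ • v n j))) →
        (∀ n < N, ∀ i : Fin k,
          let vt := v n i + (τ * γ) • J (x n) (v n i)
          let w := vt - ∑ j ∈ Finset.Iio i, ⟪vt, v (n+1) j⟫ • v (n+1) j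
          w ≠ 0 ∧ v (n+1) i = ‖w‖⁻¹ • w) →
        ∀ n < N, ∀ i : Fin k, ‖v (n+1) i - v n i‖ ≤ Q * τ :=
  hisd_stmt0_general d k F J L hL hLip hgrow β γ hβ hγ T hT x₀ v₀ hv₀
end
end

section
/- Under Assumption A, there exist τ₀ > 0 and Q > 0, depending only on d, k, L, β, γ, ‖x₀‖ and T, such that for every N ∈ ℕ with τ = T/N ≤ τ₀, the reciprocal of the Gram–Schmidt normalization factor of the discrete HiSD scheme satisfies |1/Y_{i,n} − 1 + τγ v_{i,n−1}ᵀ J(x_{n−1}) v_{i,n−1}| ≤ Q τ² for all 1 ≤ i ≤ k and 1 ≤ n ≤ N. -/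
/-!
Along the scheme each `v n` stays orthonormal, and `I - 2 Σ v_j v_jᵀ` is an isometry, so
`1 + ‖x n‖` grows at most by the factor `1 + τβL` per step; hence `‖x n‖ ≤ (1 + ‖x₀‖) e^{βLT}`
and `‖J (x n)‖` is bounded by a constant `K`. The Gram–Schmidt input `v n i + τγ J (x n) (v n i)`
is therefore an `ε = τγK` perturbation of an orthonormal family. Inductively in `i`, every
Gram–Schmidt coefficient is `O(ε)` and every residual has norm at least `1/2`, so
`Y² = 1 + 2τγ⟪v, J v⟫ + O(ε²)`, and expanding `Y⁻¹` gives the claim.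
-/

open scoped RealInnerProductSpace

section Orthonormal

variable {E ι : Type*} [NormedAddCommGroup E] [InnerProductSpace ℝ E] {e : ι → E}

theorem Orthonormal.norm_sub_smul_sum_inner_sq (he : Orthonormal ℝ e) (u : E) (c : ℝ)
    (s : Finset ι) :
    ‖u - c • ∑ j ∈ s, ⟪e j, u⟫ • e j‖ ^ 2 = ‖u‖ ^ 2 - c * (2 - c) * ∑ j ∈ s, ⟪e j, u⟫ ^ 2 := by
  have hcross : ⟪u, ∑ j ∈ s, ⟪e j, u⟫ • e j⟫ = ∑ j ∈ s, ⟪e j, u⟫ ^ 2 := by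
    simp only [inner_sum, real_inner_smul_right, real_inner_comm u, sq]
  have hsq : ‖∑ j ∈ s, ⟪e j, u⟫ • e j‖ ^ 2 = ∑ j ∈ s, ⟪e j, u⟫ ^ 2 := by
    rw [← real_inner_self_eq_norm_sq, he.inner_sum]
    simp only [conj_trivial, sq]
  rw [norm_sub_sq_real, real_inner_smul_right, norm_smul, mul_pow, Real.norm_eq_abs, sq_abs,
    hcross, hsq]
  ring

theorem Orthonormal.norm_sub_two_smul_sum_inner (he : Orthonormal ℝ e) (u : E) (s : Finset ι) :
    ‖u - (2 : ℝ) • ∑ j ∈ s, ⟪e j, u⟫ • e j‖ = ‖u‖ := by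
  have h := he.norm_sub_smul_sum_inner_sq u 2 s
  rw [sub_self, mul_zero, zero_mul, sub_zero] at h
  exact (pow_left_inj₀ (norm_nonneg _) (norm_nonneg _) two_ne_zero).mp h

end Orthonormal

theorem abs_sum_mul_le_card_mul {ι : Type*} (s : Finset ι) {a b : ι → ℝ} {c : ℝ}
    (ha : ∀ l ∈ s, |a l| ≤ c) (hb : ∀ l ∈ s, |b l| ≤ c) :
    |∑ l ∈ s, a l * b l| ≤ s.card * c ^ 2 := by
  calc |∑ l ∈ s, a l * b l| ≤ ∑ l ∈ s, |a l * b l| := Finset.abs_sum_le_sum_abs _ _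
    _ ≤ ∑ _l ∈ s, c ^ 2 := Finset.sum_le_sum fun l hl => by
        rw [abs_mul, sq]
        exact mul_le_mul (ha l hl) (hb l hl) (abs_nonneg _) ((abs_nonneg _).trans (ha l hl))
    _ = s.card * c ^ 2 := by rw [Finset.sum_const, nsmul_eq_mul]

theorem le_mul_exp_of_succ_le_one_add_mul {a : ℕ → ℝ} {h : ℝ} {N : ℕ} (hh : 0 ≤ h)
    (ha₀ : 0 ≤ a 0) (ha : ∀ n < N, a (n + 1) ≤ (1 + h) * a n) :
    ∀ n ≤ N, a n ≤ a 0 * Real.exp (n * h) := by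
  intro n hn
  induction n with
  | zero => simp
  | succ n ih =>
    calc a (n + 1) ≤ (1 + h) * a n := ha n hn
      _ ≤ (1 + h) * (a 0 * Real.exp (n * h)) := by gcongr; exact ih (by omega)
      _ ≤ Real.exp h * (a 0 * Real.exp (n * h)) := by
        gcongr; linarith [Real.add_one_le_exp h]
      _ = a 0 * Real.exp ((n + 1 : ℕ) * h) := by
        rw [mul_left_comm, ← Real.exp_add]; push_cast; ring_nf

theorem abs_inv_sub_one_add_le {y s e : ℝ} (hy : 0 < y) (hsq : y ^ 2 = 1 + 2 * s + e)
    (hs : |s| ≤ 1 / 4) (he : |e| ≤ 1 / 4) :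
    |y⁻¹ - 1 + s| ≤ 8 * s ^ 2 + 4 * |e| := by
  obtain ⟨hs₁, hs₂⟩ := abs_le.mp hs
  obtain ⟨he₁, he₂⟩ := abs_le.mp he
  have hy₂ : 1 / 2 ≤ y := by nlinarith
  -- with `z = y (1 - s)`: `y⁻¹ - 1 + s = (1 - z) / y` and `1 - z² = 3 s² - 2 s³ - e (1 - s)²`
  set z := y * (1 - s) with hz
  have hz₀ : 0 ≤ z := mul_nonneg hy.le (by linarith)
  have hkey : |y⁻¹ - 1 + s| * (y * (1 + z)) = |3 * s ^ 2 - 2 * s ^ 3 - e * (1 - s) ^ 2| := by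
    have h : (y⁻¹ - 1 + s) * y = 1 - z := by field_simp; ring
    rw [← abs_of_nonneg (by positivity : 0 ≤ y * (1 + z)), ← abs_mul,
      show (y⁻¹ - 1 + s) * (y * (1 + z)) = (y⁻¹ - 1 + s) * y * (1 + z) by ring, h, hz]
    congr 1
    linear_combination (-(1 - s) ^ 2) * hsq
  have hbound : |3 * s ^ 2 - 2 * s ^ 3 - e * (1 - s) ^ 2| ≤ 4 * s ^ 2 + 2 * |e| := by
    have hes : |e * (1 - s) ^ 2| ≤ 2 * |e| := by
      rw [abs_mul, abs_of_nonneg (sq_nonneg (1 - s))]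
      have : (1 - s) ^ 2 ≤ 2 := by nlinarith
      nlinarith [abs_nonneg e]
    have hs3 : |s ^ 3| ≤ s ^ 2 / 4 := by
      rw [abs_pow, pow_succ]
      nlinarith [abs_nonneg s, sq_nonneg s, sq_abs s]
    rw [abs_le] at hes hs3 ⊢
    constructor <;> nlinarith [hes.1, hes.2, hs3.1, hs3.2]
  have hden : 1 / 2 ≤ y * (1 + z) := by nlinarith
  nlinarith [abs_nonneg (y⁻¹ - 1 + s)]

section GramSchmidt

variable {E : Type*} [NormedAddCommGroup E] [InnerProductSpace ℝ E] {k : ℕ}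

def gsResidual (w v : Fin k → E) (i : Fin k) : E :=
  w i - ∑ j ∈ Finset.Iio i, ⟪w i, v j⟫ • v j

/-- `v` is obtained from `w` by Gram–Schmidt orthonormalization, in the recursive form of the
HiSD scheme: `v i` is the normalized residual of `w i` against `v j`, `j < i`. -/
def IsGramSchmidtNormed (w v : Fin k → E) : Prop :=
  ∀ i, gsResidual w v i ≠ 0 ∧ v i = ‖gsResidual w v i‖⁻¹ • gsResidual w v i

variable {w v : Fin k → E}

theorem inner_gsResidual (w v : Fin k → E) (i : Fin k) (y : E) :
    ⟪y, gsResidual w v i⟫ = ⟪y, w i⟫ - ∑ j ∈ Finset.Iio i, ⟪w i, v j⟫ * ⟪y, v j⟫ := by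
  simp only [gsResidual, inner_sub_right, inner_sum, real_inner_smul_right]

theorem IsGramSchmidtNormed.orthonormal (h : IsGramSchmidtNormed w v) : Orthonormal ℝ v := by
  have hnorm : ∀ i, ‖v i‖ = 1 := fun i => by
    rw [(h i).2, norm_smul, norm_inv, norm_norm, inv_mul_cancel₀ (norm_ne_zero_iff.mpr (h i).1)]
  have horth : ∀ i, ∀ j < i, ⟪v j, v i⟫ = 0 := by
    intro i
    induction i using WellFoundedLT.induction with
    | _ i ih =>
      intro j hj
      rw [(h i).2, real_inner_smul_right, inner_gsResidual,
        Finset.sum_eq_single_of_mem j (Finset.mem_Iio.mpr hj)]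
      · rw [real_inner_self_eq_norm_sq, hnorm j, one_pow, mul_one, real_inner_comm, sub_self,
          mul_zero]
      · intro l hl hlj
        rcases lt_or_gt_of_ne hlj with hlj | hjl
        · rw [real_inner_comm (v l) (v j), ih j hj l hlj, mul_zero]
        · rw [ih l (Finset.mem_Iio.mp hl) j hjl, mul_zero]
  refine ⟨hnorm, fun i j hij => ?_⟩
  rcases lt_or_gt_of_ne hij with hij | hji
  · exact horth j i hij
  · rw [real_inner_comm]; exact horth i j hji

theorem norm_gsResidual_sq (hv : Orthonormal ℝ v) (i : Fin k) :
    ‖gsResidual w v i‖ ^ 2 = ‖w i‖ ^ 2 - ∑ j ∈ Finset.Iio i, ⟪w i, v j⟫ ^ 2 := by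
  have h := hv.norm_sub_smul_sum_inner_sq (w i) 1 (Finset.Iio i)
  simp only [one_smul, real_inner_comm (w i)] at h
  rw [gsResidual, h]
  ring

variable {u δ : Fin k → E} {ε : ℝ}

theorem Orthonormal.abs_inner_add_add_le (hu : Orthonormal ℝ u) (hδ : ∀ i, ‖δ i‖ ≤ ε)
    (hε : ε ≤ 1) {p q : Fin k} (hpq : p ≠ q) : |⟪u p + δ p, u q + δ q⟫| ≤ 3 * ε := by
  have hbound : ∀ a b : E, ‖a‖ ≤ 1 → ‖b‖ ≤ ε → |⟪a, b⟫| ≤ ε := fun a b ha hb =>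
    (abs_real_inner_le_norm a b).trans <| by nlinarith [norm_nonneg a, norm_nonneg b]
  have h₁ := hbound (u p) (δ q) (hu.1 p).le (hδ q)
  have h₂ := hbound (u q) (δ p) (hu.1 q).le (hδ p)
  have h₃ := hbound (δ p) (δ q) ((hδ p).trans hε) (hδ q)
  rw [real_inner_comm (δ p) (u q)] at h₂
  rw [inner_add_left, inner_add_right, inner_add_right, hu.2 hpq, zero_add, ← add_assoc]
  calc _ ≤ |⟪u p, δ q⟫| + |⟪δ p, u q⟫| + |⟪δ p, δ q⟫| := abs_add_three _ _ _
    _ ≤ 3 * ε := by linarith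

-- `392 = 8 · 49` gives `k (7ε)² ≤ ε / 8`, which keeps the coefficient bound `7ε` inductive.
theorem IsGramSchmidtNormed.norm_gsResidual_ge_and_abs_inner_le (hu : Orthonormal ℝ u)
    (hδ : ∀ i, ‖δ i‖ ≤ ε) (hε : 392 * k * ε ≤ 1) (h : IsGramSchmidtNormed (u + δ) v)
    (j : Fin k) :
    1 / 2 ≤ ‖gsResidual (u + δ) v j‖ ∧ ∀ p, j < p → |⟪(u + δ) p, v j⟫| ≤ 7 * ε := by
  induction j using WellFoundedLT.induction with
  | _ j ih =>
  have hε₀ : 0 ≤ ε := (norm_nonneg _).trans (hδ j)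
  have hk : (1 : ℝ) ≤ k := by exact_mod_cast j.pos
  have hε₁ : ε ≤ 1 / 392 := by nlinarith
  have hcard : ((Finset.Iio j).card : ℝ) ≤ k := by
    exact_mod_cast (Finset.card_le_univ _).trans_eq (Fintype.card_fin k)
  have hsum : ∀ p, j ≤ p →
      |∑ l ∈ Finset.Iio j, ⟪(u + δ) j, v l⟫ * ⟪(u + δ) p, v l⟫| ≤ ε / 8 := fun p hjp => by
    have hcoef : ∀ q, j ≤ q → ∀ l ∈ Finset.Iio j, |⟪(u + δ) q, v l⟫| ≤ 7 * ε := fun q hjq l hl =>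
      (ih l (Finset.mem_Iio.mp hl)).2 q ((Finset.mem_Iio.mp hl).trans_le hjq)
    calc _ ≤ (Finset.Iio j).card * (7 * ε) ^ 2 :=
          abs_sum_mul_le_card_mul _ (hcoef j le_rfl) (hcoef p hjp)
      _ ≤ k * (7 * ε) ^ 2 := by gcongr
      _ ≤ ε / 8 := by nlinarith
  have hnorm : 1 - ε ≤ ‖(u + δ) j‖ := by
    have := norm_sub_norm_le (u j) (-δ j)
    rw [norm_neg, sub_neg_eq_add, hu.1 j] at this
    simp only [Pi.add_apply]; linarith [hδ j]
  have hres : 1 / 2 ≤ ‖gsResidual (u + δ) v j‖ := by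
    have hsq := norm_gsResidual_sq (w := u + δ) h.orthonormal j
    have hsq_sum := hsum j le_rfl
    simp only [← sq] at hsq_sum
    rw [abs_of_nonneg (Finset.sum_nonneg fun _ _ => sq_nonneg _)] at hsq_sum
    nlinarith [norm_nonneg (gsResidual (u + δ) v j)]
  refine ⟨hres, fun p hjp => ?_⟩
  have hres₀ : 0 < ‖gsResidual (u + δ) v j‖ := by linarith
  rw [(h j).2, real_inner_smul_right, inner_gsResidual, abs_mul, abs_inv, abs_norm,
    inv_mul_le_iff₀ hres₀]
  have hcross := hu.abs_inner_add_add_le hδ (by linarith) hjp.ne'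
  calc _ ≤ |⟪(u + δ) p, (u + δ) j⟫|
        + |∑ l ∈ Finset.Iio j, ⟪(u + δ) j, v l⟫ * ⟪(u + δ) p, v l⟫| := abs_sub _ _
    _ ≤ 3 * ε + ε / 8 := add_le_add hcross (hsum p hjp.le)
    _ ≤ ‖gsResidual (u + δ) v j‖ * (7 * ε) := by nlinarith

theorem IsGramSchmidtNormed.abs_inv_norm_gsResidual_sub_le (hu : Orthonormal ℝ u)
    (hδ : ∀ i, ‖δ i‖ ≤ ε) (hε : 392 * k * ε ≤ 1) (h : IsGramSchmidtNormed (u + δ) v)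
    (i : Fin k) :
    |‖gsResidual (u + δ) v i‖⁻¹ - 1 + ⟪u i, δ i⟫| ≤ 208 * k * ε ^ 2 := by
  have hε₀ : 0 ≤ ε := (norm_nonneg _).trans (hδ i)
  have hk : (1 : ℝ) ≤ k := by exact_mod_cast i.pos
  have hε₁ : ε ≤ 1 / 392 := by nlinarith
  have hcard : ((Finset.Iio i).card : ℝ) ≤ k := by
    exact_mod_cast (Finset.card_le_univ _).trans_eq (Fintype.card_fin k)
  set σ := ∑ l ∈ Finset.Iio i, ⟪(u + δ) i, v l⟫ ^ 2 with hσ_def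
  have hσ : 0 ≤ σ ∧ σ ≤ 49 * k * ε ^ 2 := by
    have hcoef : ∀ l ∈ Finset.Iio i, |⟪(u + δ) i, v l⟫| ≤ 7 * ε := fun l hl =>
      (h.norm_gsResidual_ge_and_abs_inner_le hu hδ hε l).2 i (Finset.mem_Iio.mp hl)
    have := abs_sum_mul_le_card_mul _ hcoef hcoef
    simp only [← sq] at this
    refine ⟨Finset.sum_nonneg fun _ _ => sq_nonneg _, (le_abs_self σ).trans (this.trans ?_)⟩
    nlinarith
  have hs : |⟪u i, δ i⟫| ≤ ε :=
    (abs_real_inner_le_norm _ _).trans (by rw [hu.1 i, one_mul]; exact hδ i)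
  have hs₂ : ⟪u i, δ i⟫ ^ 2 ≤ ε ^ 2 := by
    rw [← sq_abs]; exact pow_le_pow_left₀ (abs_nonneg _) hs 2
  have hδsq : ‖δ i‖ ^ 2 ≤ ε ^ 2 := pow_le_pow_left₀ (norm_nonneg _) (hδ i) 2
  have he : |‖δ i‖ ^ 2 - σ| ≤ 50 * k * ε ^ 2 := by
    rw [abs_le]; constructor <;> nlinarith [sq_nonneg ‖δ i‖]
  have hsq : ‖gsResidual (u + δ) v i‖ ^ 2 = 1 + 2 * ⟪u i, δ i⟫ + (‖δ i‖ ^ 2 - σ) := by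
    have hnorm : ‖(u + δ) i‖ ^ 2 = 1 + 2 * ⟪u i, δ i⟫ + ‖δ i‖ ^ 2 := by
      rw [Pi.add_apply, norm_add_sq_real, hu.1 i]; ring
    rw [norm_gsResidual_sq h.orthonormal, hnorm, ← hσ_def]
    ring
  have hres := (h.norm_gsResidual_ge_and_abs_inner_le hu hδ hε i).1
  calc _ ≤ 8 * ⟪u i, δ i⟫ ^ 2 + 4 * |‖δ i‖ ^ 2 - σ| :=
        abs_inv_sub_one_add_le (by linarith) hsq (by linarith) (by nlinarith)
    _ ≤ 8 * ε ^ 2 + 4 * (50 * k * ε ^ 2) := by linarith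
    _ ≤ 208 * k * ε ^ 2 := by nlinarith [sq_nonneg ε]

end GramSchmidt

theorem norm_le_of_reflected_euler_step {E : Type*} [NormedAddCommGroup E]
    [InnerProductSpace ℝ E] {k N : ℕ} {F : E → E} {x : ℕ → E} {e : ℕ → Fin k → E} {L β τ : ℝ}
    (hL : 0 ≤ L) (hβ : 0 ≤ β) (hτ : 0 ≤ τ) (he : ∀ n ≤ N, Orthonormal ℝ (e n))
    (hgrow : ∀ y, ‖F y‖ ≤ L * (1 + ‖y‖))
    (hstep : ∀ n < N, x (n + 1) =
      x n + τ • (β • (F (x n) - (2 : ℝ) • ∑ j, ⟪e n j, F (x n)⟫ • e n j))) :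
    ∀ n ≤ N, ‖x n‖ ≤ (1 + ‖x 0‖) * Real.exp (β * L * (N * τ)) := by
  have hgronwall := le_mul_exp_of_succ_le_one_add_mul (a := fun n => 1 + ‖x n‖)
    (h := τ * β * L) (by positivity) (by positivity) fun n hn => by
      have hmove : ‖x (n + 1) - x n‖ ≤ τ * β * L * (1 + ‖x n‖) := by
        rw [hstep n hn, add_sub_cancel_left, norm_smul, norm_smul,
          (he n hn.le).norm_sub_two_smul_sum_inner, Real.norm_of_nonneg hτ,
          Real.norm_of_nonneg hβ, mul_assoc τ, mul_assoc τ, mul_assoc β]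
        gcongr
        exact hgrow _
      linarith [norm_le_norm_add_norm_sub' (x (n + 1)) (x n)]
  intro n hn
  calc ‖x n‖ ≤ (1 + ‖x 0‖) * Real.exp (n * (τ * β * L)) := by linarith [hgronwall n hn]
    _ ≤ (1 + ‖x 0‖) * Real.exp (β * L * (N * τ)) := by
      gcongr _ * Real.exp ?_
      have : (n : ℝ) ≤ N := by exact_mod_cast hn
      nlinarith [mul_nonneg (mul_nonneg hτ hβ) hL]

theorem hisd_stmt3_general
    (d k : ℕ) (hk : 1 ≤ k)
    (F : EuclideanSpace ℝ (Fin d) → EuclideanSpace ℝ (Fin d))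
    (J : EuclideanSpace ℝ (Fin d) → (EuclideanSpace ℝ (Fin d) →L[ℝ] EuclideanSpace ℝ (Fin d)))
    (L : ℝ) (hL : 0 < L)
    (hLip : ∀ x₁ x₂ : EuclideanSpace ℝ (Fin d), ‖J x₂ - J x₁‖ + ‖F x₂ - F x₁‖ ≤ L * ‖x₂ - x₁‖)
    (hgrow : ∀ x : EuclideanSpace ℝ (Fin d), ‖F x‖ ≤ L * (1 + ‖x‖))
    (β γ : ℝ) (hβ : 0 < β) (hγ : 0 < γ)
    (T : ℝ) (hT : 0 < T)
    (x₀ : EuclideanSpace ℝ (Fin d))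
    (v₀ : Fin k → EuclideanSpace ℝ (Fin d))
    (hv₀ : ∀ i j : Fin k, ⟪v₀ i, v₀ j⟫ = if i = j then (1:ℝ) else 0) :
    ∃ τ₀ > (0:ℝ), ∃ Q > (0:ℝ), ∀ (N : ℕ) (τ : ℝ), 0 < N → τ = T / N → τ ≤ τ₀ →
      ∀ (x : ℕ → EuclideanSpace ℝ (Fin d)) (v : ℕ → Fin k → EuclideanSpace ℝ (Fin d)),
        x 0 = x₀ → v 0 = v₀ →
        (∀ n < N, x (n+1) = x n + τ •
            (β • (F (x n) - (2:ℝ) • ∑ j, ⟪v n j, F (x n)⟫ • v n j))) →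
        (∀ n < N, ∀ i : Fin k,
          let vt := v n i + (τ * γ) • J (x n) (v n i)
          let w := vt - ∑ j ∈ Finset.Iio i, ⟪vt, v (n+1) j⟫ • v (n+1) j
          w ≠ 0 ∧ v (n+1) i = ‖w‖⁻¹ • w) →
        ∀ n < N, ∀ i : Fin k,
          let vt := v n i + (τ * γ) • J (x n) (v n i)
          let Y := ‖vt - ∑ j ∈ Finset.Iio i, ⟪vt, v (n+1) j⟫ • v (n+1) j‖
          |Y⁻¹ - 1 + τ * γ * ⟪v n i, J (x n) (v n i)⟫| ≤ Q * τ^2 := by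
  have hk₀ : (0 : ℝ) < k := by exact_mod_cast hk
  set M := (1 + ‖x₀‖) * Real.exp (β * L * T)
  set K := ‖J x₀‖ + L * (M + ‖x₀‖)
  refine ⟨1 / (392 * k * (γ * K)), by positivity, 208 * k * (γ * K) ^ 2, by positivity, ?_⟩
  intro N τ hN hτ hτ₀ x v hx hv hstep hGS
  have hτpos : 0 < τ := by rw [hτ]; positivity
  have hNτ : N * τ = T := by rw [hτ]; field_simp
  have hON : ∀ n ≤ N, Orthonormal ℝ (v n)
    | 0, _ => hv ▸ orthonormal_iff_ite.mpr hv₀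
    | n + 1, hn => IsGramSchmidtNormed.orthonormal
        (w := fun i => v n i + (τ * γ) • J (x n) (v n i)) (hGS n hn)
  have hx : ∀ n ≤ N, ‖x n‖ ≤ M := by
    simpa only [hx, hNτ] using
      norm_le_of_reflected_euler_step hL.le hβ.le hτpos.le hON hgrow hstep
  have hJ : ∀ n ≤ N, ‖J (x n)‖ ≤ K := fun n hn => by
    have := mul_le_mul_of_nonneg_left
      ((norm_sub_le (x n) x₀).trans (add_le_add (hx n hn) le_rfl)) hL.le
    linarith [hLip x₀ (x n), norm_sub_norm_le (J (x n)) (J x₀), norm_nonneg (F (x n) - F x₀)]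
  intro n hn i
  have hδ : ∀ m, ‖(τ * γ) • J (x n) (v n m)‖ ≤ τ * γ * K := fun m => by
    rw [norm_smul, Real.norm_of_nonneg (by positivity)]
    gcongr
    calc _ ≤ ‖J (x n)‖ * ‖v n m‖ := (J (x n)).le_opNorm _
      _ ≤ K := by rw [(hON n hn.le).1 m, mul_one]; exact hJ n hn.le
  have hε : 392 * k * (τ * γ * K) ≤ 1 := by
    rw [le_div_iff₀ (by positivity)] at hτ₀; linarith
  have key := IsGramSchmidtNormed.abs_inv_norm_gsResidual_sub_le
    (δ := fun m => (τ * γ) • J (x n) (v n m)) (hON n hn.le) hδ hε (hGS n hn) i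
  rw [real_inner_smul_right] at key
  exact key.trans_eq (by ring)

theorem hisd_stmt3
    (d k : ℕ) (hd : 1 ≤ d) (hk : 1 ≤ k) (hkd : k ≤ d)
    (F : EuclideanSpace ℝ (Fin d) → EuclideanSpace ℝ (Fin d))
    (J : EuclideanSpace ℝ (Fin d) → (EuclideanSpace ℝ (Fin d) →L[ℝ] EuclideanSpace ℝ (Fin d)))
    (hJsymm : ∀ x u w, ⟪J x u, w⟫ = ⟪u, J x w⟫)
    (L : ℝ) (hL : 0 < L)
    (hLip : ∀ x₁ x₂ : EuclideanSpace ℝ (Fin d), ‖J x₂ - J x₁‖ + ‖F x₂ - F x₁‖ ≤ L * ‖x₂ - x₁‖)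
    (hgrow : ∀ x : EuclideanSpace ℝ (Fin d), ‖F x‖ ≤ L * (1 + ‖x‖))
    (β γ : ℝ) (hβ : 0 < β) (hγ : 0 < γ)
    (T : ℝ) (hT : 0 < T)
    (x₀ : EuclideanSpace ℝ (Fin d))
    (v₀ : Fin k → EuclideanSpace ℝ (Fin d))
    (hv₀ : ∀ i j : Fin k, ⟪v₀ i, v₀ j⟫ = if i = j then (1:ℝ) else 0) :
    ∃ τ₀ > (0:ℝ), ∃ Q > (0:ℝ), ∀ (N : ℕ) (τ : ℝ), 0 < N → τ = T / N → τ ≤ τ₀ →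
      ∀ (x : ℕ → EuclideanSpace ℝ (Fin d)) (v : ℕ → Fin k → EuclideanSpace ℝ (Fin d)),
        x 0 = x₀ → v 0 = v₀ →
        (∀ n < N, x (n+1) = x n + τ •
            (β • (F (x n) - (2:ℝ) • ∑ j, ⟪v n j, F (x n)⟫ • v n j))) →
        (∀ n < N, ∀ i : Fin k,
          let vt := v n i + (τ * γ) • J (x n) (v n i)
          let w := vt - ∑ j ∈ Finset.Iio i, ⟪vt, v (n+1) j⟫ • v (n+1) j
          w ≠ 0 ∧ v (n+1) i = ‖w‖⁻¹ • w) →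
        ∀ n < N, ∀ i : Fin k,
          let vt := v n i + (τ * γ) • J (x n) (v n i)
          let Y := ‖vt - ∑ j ∈ Finset.Iio i, ⟪vt, v (n+1) j⟫ • v (n+1) j‖
          |Y⁻¹ - 1 + τ * γ * ⟪v n i, J (x n) (v n i)⟫| ≤ Q * τ^2 :=
  hisd_stmt3_general d k hk F J L hL hLip hgrow β γ hβ hγ T hT x₀ v₀ hv₀
end

section
/- Under Assumption A, there exist τ₀ > 0 and Q > 0, depending only on d, k, L and T, such that for every N ∈ ℕ with τ = T/N ≤ τ₀, the iterates of the constrained discrete HiSD scheme satisfy |‖x̃_n‖² − 1 − 2τ x_{n−1}ᵀ F(x_{n−1})| ≤ Q τ² for all 1 ≤ n ≤ N. -/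
/-!
The retraction and the vector transport followed by Gram–Schmidt put every iterate `x n` on the
unit sphere and every `v n i` at unit length in its tangent space, whatever the previous iterate
was. Since the reflected force `S = (I - 2 ∑ v vᵀ) F(x)` then differs from `F(x)` by a vector
orthogonal to `x`, `‖x + τ S‖² = 1 + 2τ⟪x, F x⟫ + τ²‖S‖²` exactly, and `‖S‖ ≤ (1 + 2k)‖F x‖ ≤ 2L(1 + 2k)`
by the growth bound on the sphere.
-/

open scoped RealInnerProductSpace BigOperators

noncomputable section

variable {E ι : Type*} [NormedAddCommGroup E] [InnerProductSpace ℝ E]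

def frameReflection [Fintype ι] (v : ι → E) (y : E) : E :=
  y - (2 : ℝ) • ∑ j, ⟪v j, y⟫ • v j

structure IsUnitTangentFrame (x : E) (v : ι → E) : Prop where
  norm_point : ‖x‖ = 1
  norm_vec : ∀ i, ‖v i‖ = 1
  inner_vec_point : ∀ i, ⟪v i, x⟫ = 0

theorem inner_sub_inner_smul_self_of_norm_eq_one {x : E} (hx : ‖x‖ = 1) (u : E) :
    ⟪u - ⟪u, x⟫ • x, x⟫ = 0 := by
  rw [inner_sub_left, real_inner_smul_left, real_inner_self_eq_norm_sq, hx]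
  ring

theorem inner_sum_smul_eq_zero (s : Finset ι) (c : ι → ℝ) {w : ι → E} {x : E}
    (h : ∀ j ∈ s, ⟪w j, x⟫ = 0) : ⟪∑ j ∈ s, c j • w j, x⟫ = 0 := by
  rw [sum_inner]
  exact Finset.sum_eq_zero fun j hj => by rw [real_inner_smul_left, h j hj, mul_zero]

theorem inner_gramSchmidt_projected_eq_zero [LinearOrder ι] [LocallyFiniteOrderBot ι]
    [WellFoundedLT ι] {x : E} (hx : ‖x‖ = 1) {u v : ι → E}
    (hv : ∀ i, ∃ c : ℝ, v i = c • ((u i - ⟪u i, x⟫ • x) -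
      ∑ j ∈ Finset.Iio i, ⟪u i - ⟪u i, x⟫ • x, v j⟫ • v j)) (i : ι) :
    ⟪v i, x⟫ = 0 := by
  induction i using WellFoundedLT.induction with
  | _ i ih =>
    obtain ⟨c, hc⟩ := hv i
    rw [hc, real_inner_smul_left, inner_sub_left, inner_sub_inner_smul_self_of_norm_eq_one hx,
      inner_sum_smul_eq_zero _ _ fun j hj => ih j (Finset.mem_Iio.mp hj)]
    ring

theorem isUnitTangentFrame_of_normalize [LinearOrder ι] [LocallyFiniteOrderBot ι]
    [WellFoundedLT ι] {xt x : E} {v : ι → E} (hxt : xt ≠ 0) (hx : x = ‖xt‖⁻¹ • xt) (u : ι → E)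
    (hv : ∀ i,
      let vh := u i - ⟪u i, x⟫ • x
      let w := vh - ∑ j ∈ Finset.Iio i, ⟪vh, v j⟫ • v j
      w ≠ 0 ∧ v i = ‖w‖⁻¹ • w) :
    IsUnitTangentFrame x v := by
  have hx1 : ‖x‖ = 1 := hx ▸ norm_smul_inv_norm hxt
  refine ⟨hx1, fun i => ?_, inner_gramSchmidt_projected_eq_zero hx1 fun i => ⟨_, (hv i).2⟩⟩
  obtain ⟨hw, hvi⟩ := hv i
  exact hvi ▸ norm_smul_inv_norm hw

section Reflection

variable [Fintype ι]

theorem inner_frameReflection_of_inner_eq_zero {x : E} {v : ι → E} (hvx : ∀ j, ⟪v j, x⟫ = 0)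
    (y : E) : ⟪x, frameReflection v y⟫ = ⟪x, y⟫ := by
  rw [frameReflection, inner_sub_right, real_inner_smul_right,
    ← real_inner_comm x (∑ j, ⟪v j, y⟫ • v j), inner_sum_smul_eq_zero _ _ fun j _ => hvx j]
  ring

theorem norm_frameReflection_le {v : ι → E} (hv : ∀ j, ‖v j‖ ≤ 1) (y : E) :
    ‖frameReflection v y‖ ≤ (1 + 2 * Fintype.card ι) * ‖y‖ := by
  have hsum : ‖∑ j, ⟪v j, y⟫ • v j‖ ≤ Fintype.card ι * ‖y‖ :=
    calc ‖∑ j, ⟪v j, y⟫ • v j‖ ≤ ∑ j, ‖⟪v j, y⟫ • v j‖ := norm_sum_le _ _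
      _ ≤ ∑ _j : ι, ‖y‖ := Finset.sum_le_sum fun j _ => by
          rw [norm_smul, Real.norm_eq_abs]
          calc |⟪v j, y⟫| * ‖v j‖ ≤ (‖v j‖ * ‖y‖) * 1 :=
                mul_le_mul (abs_real_inner_le_norm _ _) (hv j) (norm_nonneg _)
                  (by positivity)
            _ ≤ ‖y‖ := by nlinarith [hv j, norm_nonneg y, norm_nonneg (v j)]
      _ = Fintype.card ι * ‖y‖ := by simp
  calc ‖frameReflection v y‖ ≤ ‖y‖ + ‖(2 : ℝ) • ∑ j, ⟪v j, y⟫ • v j‖ := norm_sub_le _ _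
    _ ≤ ‖y‖ + 2 * (Fintype.card ι * ‖y‖) := by
        rw [norm_smul, Real.norm_two]
        gcongr
    _ = (1 + 2 * Fintype.card ι) * ‖y‖ := by ring

theorem IsUnitTangentFrame.norm_add_smul_frameReflection_sq {x : E} {v : ι → E}
    (h : IsUnitTangentFrame x v) (τ : ℝ) (y : E) :
    ‖x + τ • frameReflection v y‖ ^ 2 =
      1 + 2 * τ * ⟪x, y⟫ + τ ^ 2 * ‖frameReflection v y‖ ^ 2 := by
  rw [norm_add_sq_real, real_inner_smul_right,
    inner_frameReflection_of_inner_eq_zero h.inner_vec_point, norm_smul, h.norm_point,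
    Real.norm_eq_abs, mul_pow, sq_abs]
  ring

end Reflection

theorem hisd_stmt11_general
    (d k : ℕ)
    (F : EuclideanSpace ℝ (Fin d) → EuclideanSpace ℝ (Fin d))
    (J : EuclideanSpace ℝ (Fin d) → (EuclideanSpace ℝ (Fin d) →L[ℝ] EuclideanSpace ℝ (Fin d)))
    (L : ℝ) (hL : 0 < L)
    (hgrow : ∀ x : EuclideanSpace ℝ (Fin d), ‖F x‖ ≤ L * (1 + ‖x‖))
    (T : ℝ)
    (x₀ : EuclideanSpace ℝ (Fin d)) (hx₀ : ‖x₀‖ = 1)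
    (v₀ : Fin k → EuclideanSpace ℝ (Fin d))
    (hv₀ : ∀ i j : Fin k, ⟪v₀ i, v₀ j⟫ = if i = j then (1:ℝ) else 0)
    (hv₀x : ∀ i : Fin k, ⟪v₀ i, x₀⟫ = 0) :
    ∃ τ₀ > (0:ℝ), ∃ Q > (0:ℝ), ∀ (N : ℕ) (τ : ℝ), 0 < N → τ = T / N → τ ≤ τ₀ →
      ∀ (x : ℕ → EuclideanSpace ℝ (Fin d)) (v : ℕ → Fin k → EuclideanSpace ℝ (Fin d)),
        x 0 = x₀ → v 0 = v₀ →
        (∀ n < N,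
          let xt := x n + τ • (F (x n) - (2:ℝ) • ∑ j, ⟪v n j, F (x n)⟫ • v n j)
          xt ≠ 0 ∧ x (n+1) = ‖xt‖⁻¹ • xt) →
        (∀ n < N, ∀ i : Fin k,
          let vt := v n i + τ • J (x n) (v n i)
          let vh := vt - ⟪vt, x (n+1)⟫ • x (n+1)
          let w := vh - ∑ j ∈ Finset.Iio i, ⟪vh, v (n+1) j⟫ • v (n+1) j
          w ≠ 0 ∧ v (n+1) i = ‖w‖⁻¹ • w) →
        ∀ n < N,
          |‖x n + τ • (F (x n) - (2:ℝ) • ∑ j, ⟪v n j, F (x n)⟫ • v n j)‖^2 -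
            1 - 2 * τ * ⟪x n, F (x n)⟫| ≤ Q * τ^2 := by
  refine ⟨1, one_pos, (2 * L * (1 + 2 * k)) ^ 2, by positivity, ?_⟩
  intro N τ _ _ _ x v hx0 hv0 hxstep hvstep n hn
  have hframe : IsUnitTangentFrame (x n) (v n) := by
    cases n with
    | zero =>
      rw [hx0, hv0]
      exact ⟨hx₀, (orthonormal_iff_ite.mpr hv₀).1, hv₀x⟩
    | succ m =>
      obtain ⟨hxt, hx⟩ := hxstep m (by omega)
      exact isUnitTangentFrame_of_normalize hxt hx _ (hvstep m (by omega))
  have hF : ‖F (x n)‖ ≤ 2 * L := by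
    have := hgrow (x n)
    rw [hframe.norm_point] at this
    linarith
  have hS : ‖frameReflection (v n) (F (x n))‖ ≤ 2 * L * (1 + 2 * k) := by
    have := norm_frameReflection_le (fun j => (hframe.norm_vec j).le) (F (x n))
    rw [Fintype.card_fin] at this
    nlinarith
  change |‖x n + τ • frameReflection (v n) (F (x n))‖ ^ 2 - 1 - 2 * τ * ⟪x n, F (x n)⟫| ≤ _
  rw [hframe.norm_add_smul_frameReflection_sq]
  calc _ = τ ^ 2 * ‖frameReflection (v n) (F (x n))‖ ^ 2 := by
        ring_nf
        exact abs_of_nonneg (by positivity)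
    _ ≤ τ ^ 2 * (2 * L * (1 + 2 * k)) ^ 2 := by gcongr
    _ = _ := mul_comm _ _

theorem hisd_stmt11
    (d k : ℕ) (hd : 1 ≤ d) (hk : 1 ≤ k) (hkd : k ≤ d)
    (F : EuclideanSpace ℝ (Fin d) → EuclideanSpace ℝ (Fin d))
    (J : EuclideanSpace ℝ (Fin d) → (EuclideanSpace ℝ (Fin d) →L[ℝ] EuclideanSpace ℝ (Fin d)))
    (hJsymm : ∀ x u w, ⟪J x u, w⟫ = ⟪u, J x w⟫)
    (L : ℝ) (hL : 0 < L)
    (hLip : ∀ x₁ x₂ : EuclideanSpace ℝ (Fin d), ‖J x₂ - J x₁‖ + ‖F x₂ - F x₁‖ ≤ L * ‖x₂ - x₁‖)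
    (hgrow : ∀ x : EuclideanSpace ℝ (Fin d), ‖F x‖ ≤ L * (1 + ‖x‖))
    (T : ℝ) (hT : 0 < T)
    (x₀ : EuclideanSpace ℝ (Fin d)) (hx₀ : ‖x₀‖ = 1)
    (v₀ : Fin k → EuclideanSpace ℝ (Fin d))
    (hv₀ : ∀ i j : Fin k, ⟪v₀ i, v₀ j⟫ = if i = j then (1:ℝ) else 0)
    (hv₀x : ∀ i : Fin k, ⟪v₀ i, x₀⟫ = 0) :
    ∃ τ₀ > (0:ℝ), ∃ Q > (0:ℝ), ∀ (N : ℕ) (τ : ℝ), 0 < N → τ = T / N → τ ≤ τ₀ →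
      ∀ (x : ℕ → EuclideanSpace ℝ (Fin d)) (v : ℕ → Fin k → EuclideanSpace ℝ (Fin d)),
        x 0 = x₀ → v 0 = v₀ →
        (∀ n < N,
          let xt := x n + τ • (F (x n) - (2:ℝ) • ∑ j, ⟪v n j, F (x n)⟫ • v n j)
          xt ≠ 0 ∧ x (n+1) = ‖xt‖⁻¹ • xt) →
        (∀ n < N, ∀ i : Fin k,
          let vt := v n i + τ • J (x n) (v n i)
          let vh := vt - ⟪vt, x (n+1)⟫ • x (n+1)
          let w := vh - ∑ j ∈ Finset.Iio i, ⟪vh, v (n+1) j⟫ • v (n+1) j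
          w ≠ 0 ∧ v (n+1) i = ‖w‖⁻¹ • w) →
        ∀ n < N,
          |‖x n + τ • (F (x n) - (2:ℝ) • ∑ j, ⟪v n j, F (x n)⟫ • v n j)‖^2 -
            1 - 2 * τ * ⟪x n, F (x n)⟫| ≤ Q * τ^2 :=
  hisd_stmt11_general d k F J L hL hgrow T x₀ hx₀ v₀ hv₀ hv₀x
end
end

section
/- Under Assumption A, there exist τ₀ > 0 and Q > 0, depending only on d, k, L and T, such that for every N ∈ ℕ with τ = T/N ≤ τ₀, the iterates of the constrained discrete HiSD scheme satisfy ‖(x_n − x_{n−1})/τ − S^{n−1} + x_{n−1} x_{n−1}ᵀ F(x_{n−1})‖ ≤ Q τ for all 1 ≤ n ≤ N; that is, the explicit Euler step followed by the normalization retraction recovers, up to an O(τ) error, the Euler discretization of the constrained state dynamics dx/dt = S − x xᵀ F(x). -/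
/-!
Write `r = ‖x + τ • S‖` with `‖x‖ = 1`. Then `|r - 1| ≤ τ‖S‖` and
`r² = 1 + 2τ⟪x, S⟫ + τ²‖S‖²`. The retraction error
`τ⁻¹ (r⁻¹ (x + τ S) - x) - S + ⟪x, S⟫ x` equals `τ⁻¹ r⁻¹ (1 - r + τ⟪x, S⟫ r) x + r⁻¹ (1 - r) S`,
and `(1 - r)(1 + r) = 1 - r²` shows that `1 - r + τ⟪x, S⟫ r = O(τ²‖S‖²)`, so the error is
`O(τ‖S‖²)`. Along the scheme every `v_{i,n}` is a unit vector orthogonal to `x_n`, since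
Gram–Schmidt stays in the orthogonal complement of `x_n`; hence `⟪x_n, S⟫ = ⟪x_n, F x_n⟫` and
`‖S‖ ≤ (1 + 2k)‖F x_n‖ ≤ 2L(1 + 2k)`.
-/

open scoped RealInnerProductSpace BigOperators

theorem abs_one_sub_add_mul_le {r c s τ : ℝ} (hr : 0 ≤ r) (hτ : 0 ≤ τ)
    (hr2 : r ^ 2 = 1 + 2 * τ * c + τ ^ 2 * s ^ 2) (hr1 : |r - 1| ≤ τ * s) (hc : |c| ≤ s) :
    |1 - r + τ * c * r| ≤ 3 * τ ^ 2 * s ^ 2 := by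
  have hs : 0 ≤ s := (abs_nonneg c).trans hc
  have hfactor : (1 - r + τ * c * r) * (1 + r) = τ * c * (r - 1) * (r + 2) - τ ^ 2 * s ^ 2 := by
    linear_combination -hr2
  have hcross : |τ * c * (r - 1)| ≤ τ ^ 2 * s ^ 2 := by
    rw [abs_mul, abs_mul, abs_of_nonneg hτ]
    calc τ * |c| * |r - 1| ≤ τ * s * (τ * s) := by gcongr
      _ = τ ^ 2 * s ^ 2 := by ring
  have hbound : |(1 - r + τ * c * r) * (1 + r)| ≤ 3 * τ ^ 2 * s ^ 2 * (1 + r) := by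
    rw [hfactor]
    calc |τ * c * (r - 1) * (r + 2) - τ ^ 2 * s ^ 2|
        ≤ |τ * c * (r - 1)| * (r + 2) + τ ^ 2 * s ^ 2 := by
          refine (abs_sub _ _).trans ?_
          rw [abs_mul, abs_of_nonneg (by linarith : 0 ≤ r + 2),
            abs_of_nonneg (by positivity : 0 ≤ τ ^ 2 * s ^ 2)]
      _ ≤ τ ^ 2 * s ^ 2 * (r + 2) + τ ^ 2 * s ^ 2 := by gcongr
      _ ≤ 3 * τ ^ 2 * s ^ 2 * (1 + r) := by nlinarith [sq_nonneg (τ * s)]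
  rw [abs_mul, abs_of_pos (by linarith : 0 < 1 + r)] at hbound
  exact le_of_mul_le_mul_right hbound (by linarith)

variable {E : Type*} [NormedAddCommGroup E] [InnerProductSpace ℝ E]

theorem norm_add_smul_sq_of_norm_eq_one {x : E} (hx : ‖x‖ = 1) (S : E) (τ : ℝ) :
    ‖x + τ • S‖ ^ 2 = 1 + 2 * τ * ⟪x, S⟫ + τ ^ 2 * ‖S‖ ^ 2 := by
  rw [norm_add_sq_real, hx, real_inner_smul_right, norm_smul, Real.norm_eq_abs, mul_pow, sq_abs]
  ring

theorem abs_norm_add_smul_sub_one_le {x : E} (hx : ‖x‖ = 1) (S : E) {τ : ℝ} (hτ : 0 ≤ τ) :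
    |‖x + τ • S‖ - 1| ≤ τ * ‖S‖ := by
  simpa [← hx, norm_smul, abs_of_nonneg hτ] using abs_norm_sub_norm_le (x + τ • S) x

theorem norm_normalize_euler_step_sub_le {x S : E} (hx : ‖x‖ = 1) {τ : ℝ} (hτ : 0 < τ)
    (hτS : τ * ‖S‖ ≤ 1 / 2) :
    ‖τ⁻¹ • (‖x + τ • S‖⁻¹ • (x + τ • S) - x) - S + ⟪x, S⟫ • x‖ ≤ 8 * ‖S‖ ^ 2 * τ := by
  set r := ‖x + τ • S‖
  set c := ⟪x, S⟫
  set s := ‖S‖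
  have hr1 : |r - 1| ≤ τ * s := abs_norm_add_smul_sub_one_le hx S hτ.le
  have hr : 1 / 2 ≤ r := by linarith [(abs_le.mp hr1).1]
  have hc : |c| ≤ s := by simpa [hx] using abs_real_inner_le_norm x S
  have hnum : |1 - r + τ * c * r| ≤ 3 * τ ^ 2 * s ^ 2 :=
    abs_one_sub_add_mul_le (norm_nonneg _) hτ.le (norm_add_smul_sq_of_norm_eq_one hx S τ) hr1 hc
  have hrinv : r⁻¹ ≤ 2 := by
    rw [inv_le_comm₀ (by linarith) (by norm_num)]; linarith
  have hdecomp : τ⁻¹ • (r⁻¹ • (x + τ • S) - x) - S + c • x =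
      (τ⁻¹ * r⁻¹ * (1 - r + τ * c * r)) • x + (r⁻¹ * (1 - r)) • S := by
    have : r ≠ 0 := by positivity
    match_scalars <;> field_simp
  rw [hdecomp]
  refine (norm_add_le _ _).trans ?_
  simp only [norm_smul, hx, Real.norm_eq_abs, abs_mul, abs_inv, abs_of_pos hτ,
    abs_of_pos (by linarith : 0 < r), abs_sub_comm 1 r]
  calc τ⁻¹ * r⁻¹ * |1 - r + τ * c * r| * 1 + r⁻¹ * |r - 1| * s
      ≤ τ⁻¹ * 2 * (3 * τ ^ 2 * s ^ 2) * 1 + 2 * (τ * s) * s := by gcongr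
    _ = 8 * s ^ 2 * τ := by field_simp; ring

theorem inner_sub_two_smul_sum_inner_smul {ι : Type*} [Fintype ι] {x : E} {v : ι → E}
    (hv : ∀ j, ⟪v j, x⟫ = 0) (y : E) :
    ⟪x, y - (2 : ℝ) • ∑ j, ⟪v j, y⟫ • v j⟫ = ⟪x, y⟫ := by
  have hv' : ∀ j, ⟪x, v j⟫ = 0 := fun j => by rw [real_inner_comm]; exact hv j
  simp [inner_sub_right, inner_sum, real_inner_smul_right, hv']

theorem norm_sub_two_smul_sum_inner_smul_le {ι : Type*} [Fintype ι] {v : ι → E}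
    (hv : ∀ j, ‖v j‖ ≤ 1) (y : E) :
    ‖y - (2 : ℝ) • ∑ j, ⟪v j, y⟫ • v j‖ ≤ (1 + 2 * Fintype.card ι) * ‖y‖ := by
  have hterm : ∀ j, ‖⟪v j, y⟫ • v j‖ ≤ ‖y‖ := fun j => by
    rw [norm_smul, Real.norm_eq_abs]
    calc |⟪v j, y⟫| * ‖v j‖ ≤ ‖v j‖ * ‖y‖ * 1 := by
          gcongr
          exacts [abs_real_inner_le_norm _ _, hv j]
      _ ≤ ‖y‖ := by nlinarith [hv j, norm_nonneg y, norm_nonneg (v j)]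
  calc ‖y - (2 : ℝ) • ∑ j, ⟪v j, y⟫ • v j‖
      ≤ ‖y‖ + 2 * ∑ j, ‖⟪v j, y⟫ • v j‖ := by
        refine (norm_sub_le _ _).trans ?_
        rw [norm_smul, Real.norm_of_nonneg zero_le_two]
        gcongr
        exact norm_sum_le _ _
    _ ≤ ‖y‖ + 2 * ∑ _j : ι, ‖y‖ := by gcongr with j; exact hterm j
    _ = (1 + 2 * Fintype.card ι) * ‖y‖ := by simp; ring

theorem inner_sub_inner_smul_self_eq_zero {x : E} (hx : ‖x‖ = 1) (y : E) :
    ⟪x, y - ⟪y, x⟫ • x⟫ = 0 := by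
  rw [inner_sub_right, real_inner_smul_right, real_inner_self_eq_norm_sq, hx, real_inner_comm]
  ring

theorem mem_of_gramSchmidt_step {ι : Type*} [LinearOrder ι] [LocallyFiniteOrderBot ι]
    [WellFoundedLT ι] (K : Submodule ℝ E) {u v : ι → E} (hu : ∀ i, u i ∈ K)
    (hv : ∀ i, ∃ c : ℝ, v i = c • (u i - ∑ j ∈ Finset.Iio i, ⟪u i, v j⟫ • v j)) (i : ι) :
    v i ∈ K := by
  induction i using WellFoundedLT.induction with
  | _ i ih =>
    obtain ⟨c, hc⟩ := hv i
    rw [hc]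
    refine K.smul_mem c (K.sub_mem (hu i) (K.sum_mem fun j hj => K.smul_mem _ ?_))
    exact ih j (Finset.mem_Iio.mp hj)

theorem hisd_step_mem_manifold {ι : Type*} [LinearOrder ι] [LocallyFiniteOrderBot ι]
    [WellFoundedLT ι] {xt x' : E} {vt v' : ι → E} (hxt : xt ≠ 0) (hx' : x' = ‖xt‖⁻¹ • xt)
    (hv' : ∀ i,
      let vh := vt i - ⟪vt i, x'⟫ • x'
      let w := vh - ∑ j ∈ Finset.Iio i, ⟪vh, v' j⟫ • v' j
      w ≠ 0 ∧ v' i = ‖w‖⁻¹ • w) :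
    ‖x'‖ = 1 ∧ ∀ i, ‖v' i‖ = 1 ∧ ⟪v' i, x'⟫ = 0 := by
  have hx'1 : ‖x'‖ = 1 := hx' ▸ norm_smul_inv_norm hxt
  refine ⟨hx'1, fun i => ⟨(hv' i).2 ▸ norm_smul_inv_norm (hv' i).1, ?_⟩⟩
  rw [real_inner_comm, ← Submodule.mem_orthogonal_singleton_iff_inner_right]
  refine mem_of_gramSchmidt_step _ (fun i => ?_) (fun i => ⟨_, (hv' i).2⟩) i
  exact Submodule.mem_orthogonal_singleton_iff_inner_right.mpr
    (inner_sub_inner_smul_self_eq_zero hx'1 _)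

theorem hisd_stmt12_general
    (d k : ℕ)
    (F : EuclideanSpace ℝ (Fin d) → EuclideanSpace ℝ (Fin d))
    (J : EuclideanSpace ℝ (Fin d) → (EuclideanSpace ℝ (Fin d) →L[ℝ] EuclideanSpace ℝ (Fin d)))
    (L : ℝ) (hL : 0 < L)
    (hgrow : ∀ x : EuclideanSpace ℝ (Fin d), ‖F x‖ ≤ L * (1 + ‖x‖))
    (T : ℝ) (hT : 0 < T)
    (x₀ : EuclideanSpace ℝ (Fin d)) (hx₀ : ‖x₀‖ = 1)
    (v₀ : Fin k → EuclideanSpace ℝ (Fin d))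
    (hv₀ : ∀ i j : Fin k, ⟪v₀ i, v₀ j⟫ = if i = j then (1:ℝ) else 0)
    (hv₀x : ∀ i : Fin k, ⟪v₀ i, x₀⟫ = 0) :
    ∃ τ₀ > (0:ℝ), ∃ Q > (0:ℝ), ∀ (N : ℕ) (τ : ℝ), 0 < N → τ = T / N → τ ≤ τ₀ →
      ∀ (x : ℕ → EuclideanSpace ℝ (Fin d)) (v : ℕ → Fin k → EuclideanSpace ℝ (Fin d)),
        x 0 = x₀ → v 0 = v₀ →
        (∀ n < N,
          let xt := x n + τ • (F (x n) - (2:ℝ) • ∑ j, ⟪v n j, F (x n)⟫ • v n j)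
          xt ≠ 0 ∧ x (n+1) = ‖xt‖⁻¹ • xt) →
        (∀ n < N, ∀ i : Fin k,
          let vt := v n i + τ • J (x n) (v n i)
          let vh := vt - ⟪vt, x (n+1)⟫ • x (n+1)
          let w := vh - ∑ j ∈ Finset.Iio i, ⟪vh, v (n+1) j⟫ • v (n+1) j
          w ≠ 0 ∧ v (n+1) i = ‖w‖⁻¹ • w) →
        ∀ n < N,
          ‖τ⁻¹ • (x (n+1) - x n) -
            (F (x n) - (2:ℝ) • ∑ j, ⟪v n j, F (x n)⟫ • v n j) +
            ⟪x n, F (x n)⟫ • x n‖ ≤ Q * τ := by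
  set M := 2 * L * (1 + 2 * k)
  have hM : 0 < M := by positivity
  refine ⟨1 / (2 * M), by positivity, 8 * M ^ 2, by positivity, ?_⟩
  intro N τ hN hτ hτ₀ x v hx0 hv0 hxstep hvstep n hn
  have hτpos : 0 < τ := hτ ▸ by positivity
  obtain ⟨hxn, hvn⟩ : ‖x n‖ = 1 ∧ ∀ i, ‖v n i‖ = 1 ∧ ⟪v n i, x n⟫ = 0 := by
    cases n with
    | zero =>
      subst hx0 hv0
      refine ⟨hx₀, fun i => ⟨?_, hv₀x i⟩⟩
      have hii := hv₀ i i
      rw [if_pos rfl, real_inner_self_eq_norm_sq] at hii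
      exact (pow_eq_one_iff_of_nonneg (norm_nonneg _) two_ne_zero).mp hii
    | succ m =>
      exact hisd_step_mem_manifold (hxstep m (by omega)).1 (hxstep m (by omega)).2
        (hvstep m (by omega))
  set S := F (x n) - (2:ℝ) • ∑ j, ⟪v n j, F (x n)⟫ • v n j
  have hS : ‖S‖ ≤ M := by
    have hF : ‖F (x n)‖ ≤ 2 * L := by linarith [hxn ▸ hgrow (x n)]
    calc ‖S‖ ≤ (1 + 2 * k) * ‖F (x n)‖ := by
          simpa using norm_sub_two_smul_sum_inner_smul_le (fun j => (hvn j).1.le) (F (x n))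
      _ ≤ (1 + 2 * k) * (2 * L) := by gcongr
      _ = M := by ring
  have hτS : τ * ‖S‖ ≤ 1 / 2 := by
    rw [le_div_iff₀ (by positivity)] at hτ₀
    nlinarith
  rw [(hxstep n hn).2, ← inner_sub_two_smul_sum_inner_smul (fun j => (hvn j).2) (F (x n))]
  calc _ ≤ 8 * ‖S‖ ^ 2 * τ := norm_normalize_euler_step_sub_le hxn hτpos hτS
    _ ≤ 8 * M ^ 2 * τ := by gcongr

theorem hisd_stmt12
    (d k : ℕ) (hd : 1 ≤ d) (hk : 1 ≤ k) (hkd : k ≤ d)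
    (F : EuclideanSpace ℝ (Fin d) → EuclideanSpace ℝ (Fin d))
    (J : EuclideanSpace ℝ (Fin d) → (EuclideanSpace ℝ (Fin d) →L[ℝ] EuclideanSpace ℝ (Fin d)))
    (hJsymm : ∀ x u w, ⟪J x u, w⟫ = ⟪u, J x w⟫)
    (L : ℝ) (hL : 0 < L)
    (hLip : ∀ x₁ x₂ : EuclideanSpace ℝ (Fin d), ‖J x₂ - J x₁‖ + ‖F x₂ - F x₁‖ ≤ L * ‖x₂ - x₁‖)
    (hgrow : ∀ x : EuclideanSpace ℝ (Fin d), ‖F x‖ ≤ L * (1 + ‖x‖))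
    (T : ℝ) (hT : 0 < T)
    (x₀ : EuclideanSpace ℝ (Fin d)) (hx₀ : ‖x₀‖ = 1)
    (v₀ : Fin k → EuclideanSpace ℝ (Fin d))
    (hv₀ : ∀ i j : Fin k, ⟪v₀ i, v₀ j⟫ = if i = j then (1:ℝ) else 0)
    (hv₀x : ∀ i : Fin k, ⟪v₀ i, x₀⟫ = 0) :
    ∃ τ₀ > (0:ℝ), ∃ Q > (0:ℝ), ∀ (N : ℕ) (τ : ℝ), 0 < N → τ = T / N → τ ≤ τ₀ →
      ∀ (x : ℕ → EuclideanSpace ℝ (Fin d)) (v : ℕ → Fin k → EuclideanSpace ℝ (Fin d)),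
        x 0 = x₀ → v 0 = v₀ →
        (∀ n < N,
          let xt := x n + τ • (F (x n) - (2:ℝ) • ∑ j, ⟪v n j, F (x n)⟫ • v n j)
          xt ≠ 0 ∧ x (n+1) = ‖xt‖⁻¹ • xt) →
        (∀ n < N, ∀ i : Fin k,
          let vt := v n i + τ • J (x n) (v n i)
          let vh := vt - ⟪vt, x (n+1)⟫ • x (n+1)
          let w := vh - ∑ j ∈ Finset.Iio i, ⟪vh, v (n+1) j⟫ • v (n+1) j
          w ≠ 0 ∧ v (n+1) i = ‖w‖⁻¹ • w) →
        ∀ n < N,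
          ‖τ⁻¹ • (x (n+1) - x n) -
            (F (x n) - (2:ℝ) • ∑ j, ⟪v n j, F (x n)⟫ • v n j) +
            ⟪x n, F (x n)⟫ • x n‖ ≤ Q * τ :=
  hisd_stmt12_general d k F J L hL hgrow T hT x₀ hx₀ v₀ hv₀ hv₀x
end
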